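/- In the complex group algebra of the free group F_N on N ≥ 1 generators, the generating operator x = X_1 commutes with X_n for every n ≥ 1: x · X_n = X_n · x. -/

import Mathlib

/-!
Coefficientwise, `(X₁ Xₙ)(v)` counts the letters `a` with `|a⁻¹ v| = n`, and `(Xₙ X₁)(v)` counts
those with `|v a⁻¹| = |a v⁻¹| = n`. For `v ≠ 1` exactly one letter cancels against the first
letter of `v` and every other letter lengthens `v` by one, so the number of letters `a` with
`|a v| = n` depends only on `|v|`. As `|v⁻¹| = |v|`, the two counts agree.
-/

/-- `Xop N n` is the operator `X_n`: the sum, in the complex group algebra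
`ℂ[F_N] = MonoidAlgebra ℂ (FreeGroup (Fin N))`, of the basis elements of all
words `w` whose reduced word has length `n`. Note `Xop N 0 = 1`. -/
noncomputable def Xop (N n : ℕ) : MonoidAlgebra ℂ (FreeGroup (Fin N)) :=
  ∑ᶠ w ∈ {w : FreeGroup (Fin N) | (FreeGroup.toWord w).length = n},
    MonoidAlgebra.of ℂ (FreeGroup (Fin N)) w

/-- The canonical trace `τ` on `ℂ[F_N]`: the coefficient at the identity. -/
noncomputable def tr {N : ℕ} (a : MonoidAlgebra ℂ (FreeGroup (Fin N))) : ℂ := a.coeff 1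

namespace FreeGroup

variable {α : Type*}

theorem inv_mk_singleton (p : α × Bool) : (mk [p])⁻¹ = mk [(p.1, !p.2)] := by
  simp [inv_mk, invRev]

theorem sum_mk_singleton_inv [Fintype α] {M : Type*} [AddCommMonoid M] (f : FreeGroup α → M) :
    ∑ p : α × Bool, f (mk [p])⁻¹ = ∑ p : α × Bool, f (mk [p]) := by
  simp_rw [inv_mk_singleton]
  exact Fintype.sum_equiv ((Equiv.refl α).prodCongr Equiv.boolNot) _ _ fun _ => rfl

variable [DecidableEq α]

theorem finite_setOf_norm_eq [Finite α] (n : ℕ) : {w : FreeGroup α | w.norm = n}.Finite :=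
  (List.finite_length_eq _ n).preimage toWord_injective.injOn

theorem mk_singleton_injective : Function.Injective fun p : α × Bool => mk [p] := fun p q h => by
  simpa [toWord_mk, reduce_singleton] using congrArg toWord h

theorem norm_eq_one_iff {w : FreeGroup α} : w.norm = 1 ↔ ∃ p, mk [p] = w := by
  constructor
  · intro h
    obtain ⟨p, hp⟩ := List.length_eq_one_iff.mp h
    exact ⟨p, by rw [← hp, mk_toWord]⟩
  · rintro ⟨p, rfl⟩
    simp [norm, toWord_mk]

theorem norm_mk_singleton_mul {v : FreeGroup α} {y : α × Bool} {T : List (α × Bool)}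
    (hv : v.toWord = y :: T) (p : α × Bool) :
    (mk [p] * v).norm = if p = (y.1, !y.2) then T.length else T.length + 2 := by
  rw [norm, ← mk_toWord (x := v), mul_mk, toWord_mk, List.singleton_append, reduce.cons,
    reduce_toWord, hv]
  by_cases hp : p = (y.1, !y.2)
  · simp [hp]
  · have : ¬(p.1 = y.1 ∧ p.2 = !y.2) := fun h => hp (Prod.ext h.1 h.2)
    simp [hp, this]

theorem sum_norm_mk_singleton_mul_congr [Fintype α] {M : Type*} [AddCommMonoid M] (g : ℕ → M)
    {u v : FreeGroup α} (h : u.norm = v.norm) :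
    ∑ p : α × Bool, g (mk [p] * u).norm = ∑ p : α × Bool, g (mk [p] * v).norm := by
  rcases hu : u.toWord with _ | ⟨y, T⟩ <;> rcases hv : v.toWord with _ | ⟨z, S⟩
  · rw [toWord_eq_nil_iff.mp hu, toWord_eq_nil_iff.mp hv]
  · simp [norm, hu, hv] at h
  · simp [norm, hu, hv] at h
  · have hTS : T.length = S.length := by simpa [norm, hu, hv] using h
    simp_rw [norm_mk_singleton_mul hu, norm_mk_singleton_mul hv, hTS]
    -- the swap of the two cancelling letters matches the summands
    refine Fintype.sum_equiv (Equiv.swap (y.1, !y.2) (z.1, !z.2)) _ _ fun p => ?_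
    simp [Equiv.swap_apply_eq_iff]

end FreeGroup

namespace MonoidAlgebra

variable {k G ι : Type*} [Semiring k] [Group G]

theorem coeff_sum_of_mul (s : Finset ι) (a : ι → G) (f : MonoidAlgebra k G) (v : G) :
    ((∑ i ∈ s, of k G (a i)) * f).coeff v = ∑ i ∈ s, f.coeff ((a i)⁻¹ * v) := by
  simp [Finset.sum_mul]

theorem coeff_mul_sum_of (s : Finset ι) (a : ι → G) (f : MonoidAlgebra k G) (v : G) :
    (f * ∑ i ∈ s, of k G (a i)).coeff v = ∑ i ∈ s, f.coeff (v * (a i)⁻¹) := by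
  simp [Finset.mul_sum]

end MonoidAlgebra

open FreeGroup MonoidAlgebra

theorem Xop_eq_sum (N n : ℕ) :
    Xop N n = ∑ w ∈ (finite_setOf_norm_eq n).toFinset, of ℂ (FreeGroup (Fin N)) w :=
  finsum_mem_eq_finite_toFinset_sum _ (finite_setOf_norm_eq n)

theorem coeff_Xop (N n : ℕ) (w : FreeGroup (Fin N)) :
    (Xop N n).coeff w = if w.norm = n then 1 else 0 := by
  simp [Xop_eq_sum, Finsupp.single_apply]

theorem Xop_one_eq_sum (N : ℕ) :
    Xop N 1 = ∑ p : Fin N × Bool, of ℂ (FreeGroup (Fin N)) (mk [p]) := by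
  classical
  rw [Xop_eq_sum, ← Finset.sum_image fun p _ q _ h => mk_singleton_injective h]
  congr 1
  ext w
  simp [norm_eq_one_iff]

theorem stmt_11_general (N : ℕ) (n : ℕ) :
    Xop N 1 * Xop N n = Xop N n * Xop N 1 := by
  ext v
  rw [Xop_one_eq_sum, coeff_sum_of_mul, coeff_mul_sum_of]
  simp only [coeff_Xop]
  calc ∑ p : Fin N × Bool, (if ((mk [p])⁻¹ * v).norm = n then (1 : ℂ) else 0)
      = ∑ p : Fin N × Bool, if (mk [p] * v).norm = n then (1 : ℂ) else 0 :=
        sum_mk_singleton_inv fun a => if (a * v).norm = n then (1 : ℂ) else 0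
    _ = ∑ p : Fin N × Bool, if (mk [p] * v⁻¹).norm = n then (1 : ℂ) else 0 :=
        sum_norm_mk_singleton_mul_congr (fun m => if m = n then (1 : ℂ) else 0) norm_inv_eq.symm
    _ = ∑ p : Fin N × Bool, if (v * (mk [p])⁻¹).norm = n then (1 : ℂ) else 0 := by
        simp_rw [← norm_inv_eq (x := v * _), mul_inv_rev, inv_inv]

theorem stmt_11 (N : ℕ) (hN : 1 ≤ N) (n : ℕ) (hn : 1 ≤ n) :
    Xop N 1 * Xop N n = Xop N n * Xop N 1 :=
  stmt_11_general N n
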